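/- arXiv:2511.16458 — 5 statements merged into one kernel-verified Lean document; each statement's English description precedes it below -/
import Mathlib

section
/- If β = Σ_{t=1}^T exp(λ_t) < 1, then F(x) > 0 for every nonzero x ∈ ℝ_+^T and F(0) = 0; consequently x = 0 is the unique minimizer of F over ℝ_+^T and the minimum value is 0. -/
/-- `F(x) = Σ_t x_t log(x_t / x̄) − Σ_t λ_t x_t`, where `x̄ = Σ_t x_t`, with the
convention that terms with `x_t = 0` contribute `0`. -/
noncomputable def F {T : ℕ} (lam : Fin T → ℝ) (x : Fin T → ℝ) : ℝ :=
  (∑ t, if x t = 0 then 0 else x t * Real.log (x t / ∑ s, x s)) - ∑ t, lam t * x t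

lemma key_term (u v w : ℝ) (hu : 0 ≤ u) (hv : 0 < v) :
    u - v * Real.exp w ≤ (if u = 0 then 0 else u * Real.log (u / v)) - w * u := by
  rcases eq_or_lt_of_le hu with h0 | h0
  · simp [← h0]
    positivity
  · rw [if_neg (ne_of_gt h0)]
    set V := v * Real.exp w with hV
    have hVpos : 0 < V := by positivity
    have hlog : Real.log (V / u) ≤ V / u - 1 :=
      Real.log_le_sub_one_of_pos (by positivity)
    have h1 : Real.log (V / u) = Real.log v + w - Real.log u := by
      rw [Real.log_div (ne_of_gt hVpos) (ne_of_gt h0), hV,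
        Real.log_mul (ne_of_gt hv) (Real.exp_ne_zero w), Real.log_exp]
    have h2 : Real.log (u / v) = Real.log u - Real.log v :=
      Real.log_div (ne_of_gt h0) (ne_of_gt hv)
    have h3 : u * Real.log (V / u) ≤ V - u := by
      have := mul_le_mul_of_nonneg_left hlog (le_of_lt h0)
      calc u * Real.log (V / u) ≤ u * (V / u - 1) := this
        _ = V - u := by field_simp
    nlinarith [h3, h1, h2]

/-- if `β = Σ_t exp(λ_t) < 1`, then `F(x) > 0` for every nonzero
`x ∈ ℝ₊^T`, `F(0) = 0`, and hence `0` is the unique minimizer with minimum value `0`. -/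
theorem stmt2 (T : ℕ) (hT : 0 < T) (lam : Fin T → ℝ)
    (hβ : ∑ t, Real.exp (lam t) < 1) :
    (∀ x : Fin T → ℝ, (∀ t, 0 ≤ x t) → x ≠ 0 → 0 < F lam x) ∧
    F lam 0 = 0 ∧
    (∀ x : Fin T → ℝ, (∀ t, 0 ≤ x t) → F lam 0 ≤ F lam x) ∧
    (∀ x : Fin T → ℝ, (∀ t, 0 ≤ x t) → F lam x = F lam 0 → x = 0) := by
  have hF0 : F lam 0 = 0 := by simp [F]
  have hpos : ∀ x : Fin T → ℝ, (∀ t, 0 ≤ x t) → x ≠ 0 → 0 < F lam x := by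
    intro x hx hne
    set S := ∑ s, x s with hS
    have hSpos : 0 < S := by
      rcases Function.ne_iff.mp hne with ⟨t, ht⟩
      have : 0 < x t := lt_of_le_of_ne (hx t) (Ne.symm ht)
      exact Finset.sum_pos' (fun s _ => hx s) ⟨t, Finset.mem_univ t, this⟩
    have hterm : ∀ t : Fin T,
        x t - S * Real.exp (lam t) ≤
          (if x t = 0 then 0 else x t * Real.log (x t / S)) - lam t * x t :=
      fun t => key_term (x t) S (lam t) (hx t) hSpos
    have hsum : ∑ t, (x t - S * Real.exp (lam t)) ≤
        ∑ t, ((if x t = 0 then 0 else x t * Real.log (x t / S)) - lam t * x t) :=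
      Finset.sum_le_sum (fun t _ => hterm t)
    have hlhs : ∑ t, (x t - S * Real.exp (lam t)) = S - S * ∑ t, Real.exp (lam t) := by
      rw [Finset.sum_sub_distrib, ← Finset.mul_sum, hS]
    have hrhs : ∑ t, ((if x t = 0 then 0 else x t * Real.log (x t / S)) - lam t * x t)
        = F lam x := by
      rw [Finset.sum_sub_distrib]; rfl
    have h1 : 0 < S - S * ∑ t, Real.exp (lam t) := by nlinarith
    calc 0 < S - S * ∑ t, Real.exp (lam t) := h1
      _ ≤ F lam x := by rw [← hlhs, ← hrhs]; exact hsum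
  refine ⟨hpos, hF0, ?_, ?_⟩
  · intro x hx
    rcases eq_or_ne x 0 with rfl | hne
    · exact le_refl _
    · exact le_of_lt (hF0 ▸ hpos x hx hne)
  · intro x hx hfx
    by_contra hne
    have := hpos x hx hne
    rw [hfx, hF0] at this
    exact lt_irrefl 0 this
end

section
/- If β = Σ_{t=1}^T exp(λ_t) > 1, then F is unbounded from below on ℝ_+^T: for x^(α) = α·(exp(λ_1),…,exp(λ_T)) with α ≥ 0 one has F(x^(α)) = −α·β·log β, which tends to −∞ as α → ∞; in particular inf_{x ∈ ℝ_+^T} F(x) = −∞. -/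
/-- if `β = Σ_t exp(λ_t) > 1` then `F` is unbounded from below on
`ℝ₊^T`: along `x^(α) = α · exp(λ)` one has `F(x^(α)) = −α β log β → −∞` as
`α → ∞`; in particular the infimum of `F` over `ℝ₊^T` is `−∞`. -/
theorem stmt4 (T : ℕ) (hT : 0 < T) (lam : Fin T → ℝ)
    (hβ : 1 < ∑ t, Real.exp (lam t)) :
    (∀ α : ℝ, 0 ≤ α →
      F lam (fun t => α * Real.exp (lam t)) =
        -(α * (∑ t, Real.exp (lam t)) * Real.log (∑ t, Real.exp (lam t)))) ∧
    Filter.Tendsto (fun α : ℝ => F lam (fun t => α * Real.exp (lam t)))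
      Filter.atTop Filter.atBot ∧
    (∀ c : ℝ, ∃ x : Fin T → ℝ, (∀ t, 0 ≤ x t) ∧ F lam x < c) := by
  set β := ∑ t, Real.exp (lam t) with hβdef
  have hβpos : 0 < β := lt_trans one_pos hβ
  have hlog : 0 < Real.log β := Real.log_pos hβ
  have h1 : ∀ α : ℝ, 0 ≤ α →
      F lam (fun t => α * Real.exp (lam t)) = -(α * β * Real.log β) := by
    intro α hα
    rcases eq_or_lt_of_le hα with h0 | h0
    · simp [F, ← h0]
    · have hne : ∀ t : Fin T, α * Real.exp (lam t) ≠ 0 := fun t =>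
        (mul_pos h0 (Real.exp_pos _)).ne'
      unfold F
      have hsum : (∑ s, α * Real.exp (lam s)) = α * β := by
        rw [hβdef, Finset.mul_sum]
      rw [hsum]
      have key : ∀ t : Fin T,
          (if α * Real.exp (lam t) = 0 then (0:ℝ) else
            α * Real.exp (lam t) * Real.log (α * Real.exp (lam t) / (α * β))) =
          α * Real.exp (lam t) * (lam t - Real.log β) := by
        intro t
        rw [if_neg (hne t)]
        congr 1
        rw [mul_div_mul_left _ _ h0.ne', Real.log_div (Real.exp_ne_zero _) hβpos.ne',
          Real.log_exp]
      rw [Finset.sum_congr rfl (fun t _ => key t), ← Finset.sum_sub_distrib]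
      have key2 : ∀ t : Fin T,
          α * Real.exp (lam t) * (lam t - Real.log β) - lam t * (α * Real.exp (lam t)) =
          -(α * Real.log β) * Real.exp (lam t) := by
        intro t; ring
      rw [Finset.sum_congr rfl (fun t _ => key2 t), ← Finset.mul_sum, ← hβdef]
      ring
  have h2 : Filter.Tendsto (fun α : ℝ => F lam (fun t => α * Real.exp (lam t)))
      Filter.atTop Filter.atBot := by
    have hb : Filter.Tendsto (fun α : ℝ => -(α * β * Real.log β))
        Filter.atTop Filter.atBot := by
      have := Filter.tendsto_neg_atTop_atBot.comp (Filter.tendsto_id.atTop_mul_const (mul_pos hβpos hlog))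
      refine this.congr fun α => ?_
      simp [mul_assoc]
    refine hb.congr' ?_
    filter_upwards [Filter.eventually_ge_atTop (0:ℝ)] with α hα
    exact (h1 α hα).symm
  refine ⟨h1, h2, fun c => ?_⟩
  obtain ⟨α, hαc, hα0⟩ :=
    ((h2.eventually (Filter.eventually_lt_atBot c)).and
      (Filter.eventually_ge_atTop (0:ℝ))).exists
  exact ⟨fun t => α * Real.exp (lam t),
    fun t => mul_nonneg hα0 (Real.exp_pos _).le, hαc⟩
end

section
/- Weak duality: let (M_1,…,M_T) be any feasible tuple and let λ_t, ρ_t ∈ ℝ^n for t = 1,…,T satisfy the dual constraint Σ_{t=1}^T exp(λ_t(i) + ρ_t(j)) ≤ 1 for every pair of indices (i,j). Then J(M_1,…,M_T) ≥ Σ_{t=1}^T (λ_tᵀμ_t + ρ_tᵀν_t). -/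
lemma key (p s c : ℝ) (hp : 0 ≤ p) (hps : p ≤ s) :
    p - s * Real.exp c ≤ (if p = 0 then 0 else p * Real.log (p / s)) - p * c := by
  rcases eq_or_lt_of_le hp with h | h
  · rw [if_pos h.symm, ← h]
    have hs0 : 0 ≤ s := le_trans hp hps
    have : 0 ≤ s * Real.exp c := mul_nonneg hs0 (Real.exp_nonneg c)
    linarith
  · have hs : 0 < s := lt_of_lt_of_le h hps
    rw [if_neg (ne_of_gt h)]
    have hx : 0 < s * Real.exp c / p := by positivity
    have hle := Real.log_le_sub_one_of_pos hx
    have hlog : Real.log (s * Real.exp c / p) = Real.log s + c - Real.log p := by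
      rw [Real.log_div (by positivity) (ne_of_gt h),
        Real.log_mul (ne_of_gt hs) (Real.exp_ne_zero c), Real.log_exp]
    rw [hlog] at hle
    have hlog2 : Real.log (p / s) = Real.log p - Real.log s :=
      Real.log_div (ne_of_gt h) (ne_of_gt hs)
    rw [hlog2]
    have h2 := mul_le_mul_of_nonneg_left hle h.le
    have h3 : p * (s * Real.exp c / p) = s * Real.exp c := by field_simp
    nlinarith [h2, h3]

lemma key2 {T : ℕ} (p : Fin T → ℝ) (c : Fin T → ℝ) (hp : ∀ t, 0 ≤ p t)
    (hc : ∑ t, Real.exp (c t) ≤ 1) :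
    ∑ t, p t * c t ≤
      ∑ t, (if p t = 0 then 0 else p t * Real.log (p t / ∑ u, p u)) := by
  set s := ∑ u, p u with hs_def
  have hs : 0 ≤ s := Finset.sum_nonneg fun t _ => hp t
  have h2 : ∑ t, (p t - s * Real.exp (c t)) ≤
      ∑ t, ((if p t = 0 then 0 else p t * Real.log (p t / s)) - p t * c t) := by
    apply Finset.sum_le_sum
    intro t _
    exact key (p t) s (c t) (hp t)
      (Finset.single_le_sum (fun u _ => hp u) (Finset.mem_univ t))
  rw [Finset.sum_sub_distrib, Finset.sum_sub_distrib, ← Finset.mul_sum] at h2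
  nlinarith [h2, mul_le_mul_of_nonneg_left hc hs]


/-- Kullback–Leibler divergence between two matrices, with the convention that
entries with `P i j = 0` contribute `0`.  (For a feasible tuple one has
`M t ≤ M̄` entrywise, so the divergence is finite and this real-valued
definition agrees with the extended-real one.) -/
noncomputable def klMat {n : ℕ} (P Q : Matrix (Fin n) (Fin n) ℝ) : ℝ :=
  ∑ i, ∑ j, (if P i j = 0 then 0 else P i j * Real.log (P i j / Q i j))

/-- Feasibility: nonnegative matrices with prescribed row and column marginals. -/
def Feasible {n T : ℕ} (μ ν : Fin T → Fin n → ℝ)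
    (M : Fin T → Matrix (Fin n) (Fin n) ℝ) : Prop :=
  (∀ t i j, 0 ≤ M t i j) ∧ (∀ t i, ∑ j, M t i j = μ t i) ∧ (∀ t j, ∑ i, M t i j = ν t j)

/-- The objective `J(M₁,…,M_T) = Σ_t D(M_t | Σ_s M_s)`. -/
noncomputable def J {n T : ℕ} (M : Fin T → Matrix (Fin n) (Fin n) ℝ) : ℝ :=
  ∑ t, klMat (M t) (∑ s, M s)

/-- weak duality: for any feasible tuple and any dual variables
satisfying the dual constraint, the dual value bounds the objective from below. -/
theorem stmt6 (n T : ℕ) (hn : 0 < n) (hT : 0 < T)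
    (μ ν : Fin T → Fin n → ℝ)
    (hμ : ∀ t i, 0 ≤ μ t i) (hν : ∀ t j, 0 ≤ ν t j)
    (hmass : ∀ t, ∑ i, μ t i = ∑ j, ν t j)
    (M : Fin T → Matrix (Fin n) (Fin n) ℝ) (hfeas : Feasible μ ν M)
    (lam rho : Fin T → Fin n → ℝ)
    (hdual : ∀ i j : Fin n, ∑ t, Real.exp (lam t i + rho t j) ≤ 1) :
    ∑ t, ((∑ i, lam t i * μ t i) + ∑ j, rho t j * ν t j) ≤ J M := by
  obtain ⟨hnn, hrow, hcol⟩ := hfeas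
  have hbar : ∀ i j, (∑ s, M s) i j = ∑ s, M s i j := by
    intro i j; simp [Matrix.sum_apply]
  calc ∑ t, ((∑ i, lam t i * μ t i) + ∑ j, rho t j * ν t j)
      = ∑ i, ∑ j, ∑ t, M t i j * (lam t i + rho t j) := by
        have step1 : ∀ t, ((∑ i, lam t i * μ t i) + ∑ j, rho t j * ν t j)
            = ∑ i, ∑ j, M t i j * (lam t i + rho t j) := by
          intro t
          have h1 : ∑ i, lam t i * μ t i = ∑ i, ∑ j, lam t i * M t i j := by
            simp_rw [← hrow t, Finset.mul_sum]
          have h2 : (∑ j, rho t j * ν t j) = ∑ i, ∑ j, rho t j * M t i j := by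
            simp_rw [← hcol t, Finset.mul_sum]
            exact Finset.sum_comm
          rw [h1, h2, ← Finset.sum_add_distrib]
          refine Finset.sum_congr rfl fun i _ => ?_
          rw [← Finset.sum_add_distrib]
          exact Finset.sum_congr rfl fun j _ => by ring
        simp_rw [step1]
        rw [Finset.sum_comm]
        exact Finset.sum_congr rfl fun i _ => Finset.sum_comm
    _ ≤ ∑ i, ∑ j, ∑ t,
        (if M t i j = 0 then 0 else M t i j * Real.log (M t i j / (∑ s, M s) i j)) := by
        apply Finset.sum_le_sum; intro i _
        apply Finset.sum_le_sum; intro j _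
        have := key2 (fun t => M t i j) (fun t => lam t i + rho t j)
          (fun t => hnn t i j) (hdual i j)
        simpa [hbar] using this
    _ = J M := by
        unfold J klMat
        symm
        rw [Finset.sum_comm]
        exact Finset.sum_congr rfl fun i _ => Finset.sum_comm
end

section
/- Optimality certificate via dual scalings: let (M_1*,…,M_T*) be a feasible tuple with aggregate M̄* = Σ_t M_t*, and suppose there exist entrywise strictly positive vectors u_t, v_t ∈ ℝ^n, t = 1,…,T, such that (i) M_t*(i,j) = M̄*(i,j)·u_t(i)·v_t(j) for all t and all (i,j), and (ii) Σ_{t=1}^T u_t(i)·v_t(j) ≤ 1 for all (i,j). Then (M_1*,…,M_T*) is a global minimizer of J over the feasible set, and J(M_1*,…,M_T*) = Σ_{t=1}^T (Σ_i μ_t(i)·log u_t(i) + Σ_j ν_t(j)·log v_t(j)). -/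
/-- pointwise bound: `p - Q*a ≤ klterm - p*log a` -/
lemma pt_bound (p Q a : ℝ) (hp : 0 ≤ p) (hpQ : p ≤ Q) (ha : 0 < a) :
    p - Q * a ≤ (if p = 0 then 0 else p * Real.log (p / Q)) - p * Real.log a := by
  rcases eq_or_lt_of_le hp with h0 | h0
  · have hQ : 0 ≤ Q := le_trans hp hpQ
    simp [← h0]
    positivity
  · have hp' : p ≠ 0 := ne_of_gt h0
    have hQ : 0 < Q := lt_of_lt_of_le h0 hpQ
    simp only [if_neg hp']
    have hx : 0 < Q * a / p := by positivity
    have hlog := Real.log_le_sub_one_of_pos hx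
    have h2 : Real.log (p / Q) - Real.log a = -(Real.log (Q * a / p)) := by
      rw [Real.log_div (by positivity) hp', Real.log_mul (ne_of_gt hQ) (ne_of_gt ha),
        Real.log_div hp' (ne_of_gt hQ)]
      ring
    have hge : p * (Real.log (p / Q) - Real.log a) ≥ p * (1 - Q * a / p) := by
      rw [h2]
      have : 1 - Q * a / p ≤ -(Real.log (Q * a / p)) := by linarith
      exact mul_le_mul_of_nonneg_left this hp
    have h3 : p * (1 - Q * a / p) = p - Q * a := by field_simp
    nlinarith [hge]

/-- value of the linear functional on any feasible tuple -/
lemma V_eq {n T : ℕ} (μ ν : Fin T → Fin n → ℝ)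
    (M : Fin T → Matrix (Fin n) (Fin n) ℝ) (h : Feasible μ ν M)
    (u v : Fin T → Fin n → ℝ) :
    ∑ t, ∑ i, ∑ j, M t i j * (Real.log (u t i) + Real.log (v t j))
      = ∑ t, ((∑ i, μ t i * Real.log (u t i)) + ∑ j, ν t j * Real.log (v t j)) := by
  obtain ⟨hpos, hrow, hcol⟩ := h
  refine Finset.sum_congr rfl fun t _ => ?_
  have hsplit : ∑ i, ∑ j, M t i j * (Real.log (u t i) + Real.log (v t j))
      = (∑ i, ∑ j, M t i j * Real.log (u t i)) + ∑ i, ∑ j, M t i j * Real.log (v t j) := by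
    simp [mul_add, Finset.sum_add_distrib]
  rw [hsplit]
  congr 1
  · refine Finset.sum_congr rfl fun i _ => ?_
    rw [← Finset.sum_mul, hrow t i]
  · rw [Finset.sum_comm]
    refine Finset.sum_congr rfl fun j _ => ?_
    rw [← Finset.sum_mul, hcol t j]

/-- optimality certificate via dual scalings: a feasible tuple
admitting positive dual scalings `u_t, v_t` with `M_t* = M̄* ⊙ (u_t v_tᵀ)` and
`Σ_t u_t(i) v_t(j) ≤ 1` is a global minimizer of `J`, with the stated optimal value. -/
theorem stmt16 (n T : ℕ) (hn : 0 < n) (hT : 0 < T)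
    (μ ν : Fin T → Fin n → ℝ)
    (hμ : ∀ t i, 0 ≤ μ t i) (hν : ∀ t j, 0 ≤ ν t j)
    (hmass : ∀ t, ∑ i, μ t i = ∑ j, ν t j)
    (Mstar : Fin T → Matrix (Fin n) (Fin n) ℝ) (hfeas : Feasible μ ν Mstar)
    (u v : Fin T → Fin n → ℝ) (hu : ∀ t i, 0 < u t i) (hv : ∀ t j, 0 < v t j)
    (hscal : ∀ t i j, Mstar t i j = (∑ s, Mstar s) i j * (u t i * v t j))
    (hdual : ∀ i j : Fin n, ∑ t, u t i * v t j ≤ 1) :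
    (∀ M, Feasible μ ν M → J Mstar ≤ J M) ∧
    J Mstar = ∑ t, ((∑ i, μ t i * Real.log (u t i)) + ∑ j, ν t j * Real.log (v t j)) := by
  set V : ℝ := ∑ t, ((∑ i, μ t i * Real.log (u t i)) + ∑ j, ν t j * Real.log (v t j)) with hV
  -- Step 1 : J Mstar = V
  have hJstar : J Mstar = V := by
    rw [hV, ← V_eq μ ν Mstar hfeas u v]
    unfold J klMat
    refine Finset.sum_congr rfl fun t _ => Finset.sum_congr rfl fun i _ =>
      Finset.sum_congr rfl fun j _ => ?_
    by_cases h0 : Mstar t i j = 0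
    · simp [h0]
    · have huv : 0 < u t i * v t j := mul_pos (hu t i) (hv t j)
      have hMbar : (∑ s, Mstar s) i j ≠ 0 := by
        intro h
        exact h0 (by rw [hscal t i j, h, zero_mul])
      have hratio : Mstar t i j / (∑ s, Mstar s) i j = u t i * v t j := by
        rw [hscal t i j, mul_comm, mul_div_assoc, div_self hMbar, mul_one]
      rw [if_neg h0, hratio, Real.log_mul (ne_of_gt (hu t i)) (ne_of_gt (hv t j))]
  -- Step 2 : for any feasible M, V ≤ J M
  have key : ∀ M, Feasible μ ν M → V ≤ J M := by
    intro M hM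
    obtain ⟨hpos, hrow, hcol⟩ := hM
    have hQent : ∀ i j, (∑ s, M s) i j = ∑ s, M s i j := by
      intro i j; simp [Matrix.sum_apply]
    have hQle : ∀ t i j, M t i j ≤ (∑ s, M s) i j := by
      intro t i j
      rw [hQent]
      exact Finset.single_le_sum (fun s _ => hpos s i j) (Finset.mem_univ t)
    have hQ0 : ∀ i j, 0 ≤ (∑ s, M s) i j := by
      intro i j
      rw [hQent]
      exact Finset.sum_nonneg fun s _ => hpos s i j
    -- the big termwise inequality
    have h1 : ∑ t, ∑ i, ∑ j, (M t i j * (Real.log (u t i) + Real.log (v t j))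
          + (M t i j - (∑ s, M s) i j * (u t i * v t j))) ≤ J M := by
      unfold J klMat
      refine Finset.sum_le_sum fun t _ => Finset.sum_le_sum fun i _ =>
        Finset.sum_le_sum fun j _ => ?_
      have hb := pt_bound (M t i j) ((∑ s, M s) i j) (u t i * v t j)
        (hpos t i j) (hQle t i j) (mul_pos (hu t i) (hv t j))
      rw [Real.log_mul (ne_of_gt (hu t i)) (ne_of_gt (hv t j))] at hb
      linarith
    -- the remainder term is nonnegative
    have h2 : 0 ≤ ∑ t, ∑ i, ∑ j, (M t i j - (∑ s, M s) i j * (u t i * v t j)) := by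
      have hcomm : ∑ t, ∑ i, ∑ j, (M t i j - (∑ s, M s) i j * (u t i * v t j))
          = ∑ i, ∑ j, ∑ t, (M t i j - (∑ s, M s) i j * (u t i * v t j)) := by
        rw [Finset.sum_comm]
        exact Finset.sum_congr rfl fun i _ => Finset.sum_comm
      rw [hcomm]
      refine Finset.sum_nonneg fun i _ => Finset.sum_nonneg fun j _ => ?_
      have : ∑ t, (M t i j - (∑ s, M s) i j * (u t i * v t j))
          = (∑ s, M s) i j * (1 - ∑ t, u t i * v t j) := by
        rw [Finset.sum_sub_distrib, ← Finset.mul_sum, ← hQent]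
        ring
      rw [this]
      exact mul_nonneg (hQ0 i j) (by linarith [hdual i j])
    -- combine
    have hsum : ∑ t, ∑ i, ∑ j, (M t i j * (Real.log (u t i) + Real.log (v t j))
          + (M t i j - (∑ s, M s) i j * (u t i * v t j)))
        = (∑ t, ∑ i, ∑ j, M t i j * (Real.log (u t i) + Real.log (v t j)))
          + ∑ t, ∑ i, ∑ j, (M t i j - (∑ s, M s) i j * (u t i * v t j)) := by
      simp [Finset.sum_add_distrib]
    rw [hsum, V_eq μ ν M ⟨hpos, hrow, hcol⟩ u v] at h1
    linarith
  exact ⟨fun M hM => hJstar ▸ key M hM, hJstar⟩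
end

section
/- Uniqueness under a span condition on the dual scalings: let (M_1*,…,M_T*) be a feasible tuple with aggregate M̄* = Σ_t M_t*, and suppose there exist entrywise strictly positive vectors u_t, v_t ∈ ℝ^n, t = 1,…,T, such that (i) M_t*(i,j) = M̄*(i,j)·u_t(i)·v_t(j) for all t and all (i,j), and (ii) Σ_{t=1}^T u_t(i)·v_t(j) ≤ 1 for all (i,j). If in addition span{u_1,…,u_T} = ℝ^n or span{v_1,…,v_T} = ℝ^n, then (M_1*,…,M_T*) is the unique global minimizer of J over the feasible set: every feasible tuple (N_1,…,N_T) with J(N_1,…,N_T) = J(M_1*,…,M_T*) satisfies N_t = M_t* for all t. -/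
open Finset Real InformationTheory
open scoped Matrix
open Matrix (hadamard_apply vecMulVec vecMulVec_apply)

noncomputable def klTerm (p q : ℝ) : ℝ := if p = 0 then 0 else p * log (p / q)

lemma klTerm_self (p : ℝ) : klTerm p p = 0 := by
  by_cases hp : p = 0 <;> simp [klTerm, hp]

lemma klTerm_eq_sub_add_mul_klFun (p : ℝ) {q : ℝ} (hq : 0 < q) :
    klTerm p q = p - q + q * klFun (p / q) := by
  by_cases hp : p = 0
  · simp [klTerm, hp, klFun_zero]
  · rw [klTerm, if_neg hp, klFun_apply]
    field_simp
    ring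

lemma sub_le_klTerm {p q : ℝ} (hp : 0 ≤ p) (hq : 0 ≤ q) (hpq : q = 0 → p = 0) :
    p - q ≤ klTerm p q := by
  rcases hq.eq_or_lt with rfl | hq
  · simp [klTerm, hpq rfl]
  · rw [klTerm_eq_sub_add_mul_klFun p hq]
    exact le_add_of_nonneg_right (mul_nonneg hq.le (klFun_nonneg (div_nonneg hp hq.le)))

lemma eq_of_klTerm_eq_sub {p q : ℝ} (hp : 0 ≤ p) (hq : 0 ≤ q) (hpq : q = 0 → p = 0)
    (h : klTerm p q = p - q) : p = q := by
  rcases hq.eq_or_lt with rfl | hq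
  · exact hpq rfl
  · rwa [klTerm_eq_sub_add_mul_klFun p hq, add_eq_left, mul_eq_zero, or_iff_right hq.ne',
      klFun_eq_zero_iff (div_nonneg hp hq.le), div_eq_one_iff_eq hq.ne'] at h

lemma klTerm_eq_klTerm_mul_add {p q a : ℝ} (hpq : q = 0 → p = 0) (ha : 0 < a) :
    klTerm p q = klTerm p (q * a) + p * log a := by
  by_cases hp : p = 0
  · simp [klTerm, hp]
  · have hq : q ≠ 0 := mt hpq hp
    simp only [klTerm, if_neg hp]
    rw [log_div hp hq, log_div hp (mul_ne_zero hq ha.ne'), log_mul hq ha.ne']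
    ring

section klMat

variable {n : ℕ} {P Q : Matrix (Fin n) (Fin n) ℝ}

lemma klMat_eq_sum_klTerm (P Q : Matrix (Fin n) (Fin n) ℝ) :
    klMat P Q = ∑ i, ∑ j, klTerm (P i j) (Q i j) := rfl

lemma klMat_self (P : Matrix (Fin n) (Fin n) ℝ) : klMat P P = 0 := by
  simp [klMat_eq_sum_klTerm, klTerm_self]

lemma sum_sub_le_klMat (hP : ∀ i j, 0 ≤ P i j) (hQ : ∀ i j, 0 ≤ Q i j)
    (hPQ : ∀ i j, Q i j = 0 → P i j = 0) : ∑ i, ∑ j, (P i j - Q i j) ≤ klMat P Q :=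
  sum_le_sum fun i _ => sum_le_sum fun j _ => sub_le_klTerm (hP i j) (hQ i j) (hPQ i j)

lemma eq_of_klMat_eq_sum_sub (hP : ∀ i j, 0 ≤ P i j) (hQ : ∀ i j, 0 ≤ Q i j)
    (hPQ : ∀ i j, Q i j = 0 → P i j = 0) (h : ∑ i, ∑ j, (P i j - Q i j) = klMat P Q) :
    P = Q := by
  have hle i j := sub_le_klTerm (hP i j) (hQ i j) (hPQ i j)
  rw [klMat_eq_sum_klTerm, sum_eq_sum_iff_of_le fun i _ => sum_le_sum fun j _ => hle i j] at h
  ext i j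
  refine eq_of_klTerm_eq_sub (hP i j) (hQ i j) (hPQ i j) ?_
  exact ((sum_eq_sum_iff_of_le fun j _ => hle i j).1 (h i (mem_univ i)) j (mem_univ j)).symm

end klMat

lemma sum_sum_mul_add {m n R : Type*} [Fintype m] [Fintype n] [CommSemiring R]
    (P : Matrix m n R) (a : m → R) (b : n → R) :
    ∑ i, ∑ j, P i j * (a i + b j) = ∑ i, (∑ j, P i j) * a i + ∑ j, (∑ i, P i j) * b j := by
  simp only [mul_add, sum_add_distrib, sum_mul]
  rw [sum_comm (f := fun i j => P i j * b j)]

lemma Matrix.row_sum_hadamard_vecMulVec {m n R : Type*} [Fintype n] [CommSemiring R]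
    (A : Matrix m n R) (x : m → R) (y : n → R) (i : m) :
    ∑ j, (A ⊙ vecMulVec x y) i j = x i * (A *ᵥ y) i := by
  simp only [hadamard_apply, vecMulVec_apply, mulVec, dotProduct, mul_sum]
  exact sum_congr rfl fun j _ => by ring

lemma Matrix.col_sum_hadamard_vecMulVec {m n R : Type*} [Fintype m] [CommSemiring R]
    (A : Matrix m n R) (x : m → R) (y : n → R) (j : n) :
    ∑ i, (A ⊙ vecMulVec x y) i j = y j * (Aᵀ *ᵥ x) j := by
  simp only [hadamard_apply, vecMulVec_apply, mulVec, dotProduct, transpose_apply, mul_sum]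
  exact sum_congr rfl fun i _ => by ring

lemma Matrix.eq_of_mulVec_eq_of_span_eq_top {m n ι R : Type*} [Fintype n] [CommSemiring R]
    {A B : Matrix m n R} {v : ι → n → R} (hv : Submodule.span R (Set.range v) = ⊤)
    (h : ∀ t, A *ᵥ v t = B *ᵥ v t) : A = B :=
  mulVec_injective <| congrArg DFunLike.coe <|
    LinearMap.ext_on_range (f := A.mulVecLin) (g := B.mulVecLin) hv h

section Tuples

variable {n T : ℕ} {μ ν u v : Fin T → Fin n → ℝ} {N : Fin T → Matrix (Fin n) (Fin n) ℝ}

noncomputable def dualValue (μ ν u v : Fin T → Fin n → ℝ) : ℝ :=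
  ∑ t, (∑ i, μ t i * log (u t i) + ∑ j, ν t j * log (v t j))

lemma le_sum_apply (hN : ∀ t i j, 0 ≤ N t i j) (t : Fin T) (i j : Fin n) :
    N t i j ≤ (∑ s, N s) i j := by
  rw [Matrix.sum_apply]
  exact single_le_sum (fun s _ => hN s i j) (mem_univ t)

lemma hadamard_vecMulVec_nonneg (hN : ∀ t i j, 0 ≤ N t i j) (hu : ∀ t i, 0 < u t i)
    (hv : ∀ t j, 0 < v t j) (t : Fin T) (i j : Fin n) :
    0 ≤ ((∑ s, N s) ⊙ vecMulVec (u t) (v t)) i j :=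
  mul_nonneg ((hN t i j).trans (le_sum_apply hN t i j)) (mul_pos (hu t i) (hv t j)).le

lemma eq_zero_of_hadamard_vecMulVec_eq_zero (hN : ∀ t i j, 0 ≤ N t i j)
    (hu : ∀ t i, 0 < u t i) (hv : ∀ t j, 0 < v t j) (t : Fin T) (i j : Fin n)
    (h : ((∑ s, N s) ⊙ vecMulVec (u t) (v t)) i j = 0) : N t i j = 0 := by
  rw [hadamard_apply, vecMulVec_apply, mul_eq_zero, or_iff_left (mul_pos (hu t i) (hv t j)).ne']
    at h
  exact le_antisymm (h ▸ le_sum_apply hN t i j) (hN t i j)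

lemma J_eq_dualValue_add (hN : Feasible μ ν N) (hu : ∀ t i, 0 < u t i)
    (hv : ∀ t j, 0 < v t j) :
    J N = dualValue μ ν u v + ∑ t, klMat (N t) ((∑ s, N s) ⊙ vecMulVec (u t) (v t)) := by
  rw [J, dualValue, ← sum_add_distrib]
  refine sum_congr rfl fun t _ => ?_
  have hsplit i j := klTerm_eq_klTerm_mul_add (q := (∑ s, N s) i j)
    (fun h => le_antisymm (h ▸ le_sum_apply hN.1 t i j) (hN.1 t i j))
    (mul_pos (hu t i) (hv t j))
  simp only [klMat_eq_sum_klTerm, hsplit, sum_add_distrib, hadamard_apply, vecMulVec_apply,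
    log_mul (hu t _).ne' (hv t _).ne']
  rw [sum_sum_mul_add, add_comm]
  simp only [hN.2.1, hN.2.2]

lemma sum_sub_hadamard_vecMulVec (N : Fin T → Matrix (Fin n) (Fin n) ℝ)
    (u v : Fin T → Fin n → ℝ) :
    ∑ t, ∑ i, ∑ j, (N t i j - ((∑ s, N s) ⊙ vecMulVec (u t) (v t)) i j)
      = ∑ i, ∑ j, (∑ s, N s) i j * (1 - ∑ t, u t i * v t j) := by
  rw [sum_comm]
  refine sum_congr rfl fun i _ => ?_
  rw [sum_comm]
  refine sum_congr rfl fun j _ => ?_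
  simp only [sum_sub_distrib, hadamard_apply, vecMulVec_apply, ← mul_sum, Matrix.sum_apply]
  ring

lemma sum_sub_le_klMat_hadamard_vecMulVec (hN : Feasible μ ν N) (hu : ∀ t i, 0 < u t i)
    (hv : ∀ t j, 0 < v t j) (t : Fin T) :
    ∑ i, ∑ j, (N t i j - ((∑ s, N s) ⊙ vecMulVec (u t) (v t)) i j)
      ≤ klMat (N t) ((∑ s, N s) ⊙ vecMulVec (u t) (v t)) :=
  sum_sub_le_klMat (hN.1 t) (hadamard_vecMulVec_nonneg hN.1 hu hv t)
    (eq_zero_of_hadamard_vecMulVec_eq_zero hN.1 hu hv t)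

lemma sum_klMat_gap_le (hN : Feasible μ ν N) (hu : ∀ t i, 0 < u t i) (hv : ∀ t j, 0 < v t j)
    (hdual : ∀ i j, ∑ t, u t i * v t j ≤ 1) :
    ∑ t, (klMat (N t) ((∑ s, N s) ⊙ vecMulVec (u t) (v t))
        - ∑ i, ∑ j, (N t i j - ((∑ s, N s) ⊙ vecMulVec (u t) (v t)) i j))
      ≤ J N - dualValue μ ν u v := by
  have hslack : 0 ≤ ∑ i, ∑ j, (∑ s, N s) i j * (1 - ∑ t, u t i * v t j) :=
    sum_nonneg fun i _ => sum_nonneg fun j _ =>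
      mul_nonneg (by rw [Matrix.sum_apply]; exact sum_nonneg fun s _ => hN.1 s i j)
        (sub_nonneg.2 (hdual i j))
  rw [J_eq_dualValue_add hN hu hv, sum_sub_distrib, sum_sub_hadamard_vecMulVec]
  linarith

lemma dualValue_le_J (hN : Feasible μ ν N) (hu : ∀ t i, 0 < u t i) (hv : ∀ t j, 0 < v t j)
    (hdual : ∀ i j, ∑ t, u t i * v t j ≤ 1) : dualValue μ ν u v ≤ J N := by
  have hgap_nonneg := sum_nonneg fun t (_ : t ∈ univ) =>
    sub_nonneg.2 (sum_sub_le_klMat_hadamard_vecMulVec hN hu hv t)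
  linarith [sum_klMat_gap_le hN hu hv hdual]

lemma eq_hadamard_of_J_eq_dualValue (hN : Feasible μ ν N) (hu : ∀ t i, 0 < u t i)
    (hv : ∀ t j, 0 < v t j) (hdual : ∀ i j, ∑ t, u t i * v t j ≤ 1)
    (hJ : J N = dualValue μ ν u v) (t : Fin T) :
    N t = (∑ s, N s) ⊙ vecMulVec (u t) (v t) := by
  have hgap_nonneg : ∀ t ∈ univ, 0 ≤ klMat (N t) ((∑ s, N s) ⊙ vecMulVec (u t) (v t))
      - ∑ i, ∑ j, (N t i j - ((∑ s, N s) ⊙ vecMulVec (u t) (v t)) i j) :=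
    fun t _ => sub_nonneg.2 (sum_sub_le_klMat_hadamard_vecMulVec hN hu hv t)
  have hgap_sum := sum_klMat_gap_le hN hu hv hdual
  rw [hJ, sub_self] at hgap_sum
  have hgap := (sum_eq_zero_iff_of_nonneg hgap_nonneg).1
    (le_antisymm hgap_sum (sum_nonneg hgap_nonneg)) t (mem_univ t)
  exact eq_of_klMat_eq_sum_sub (hN.1 t) (hadamard_vecMulVec_nonneg hN.1 hu hv t)
    (eq_zero_of_hadamard_vecMulVec_eq_zero hN.1 hu hv t) (sub_eq_zero.1 hgap).symm

lemma J_eq_dualValue_of_eq_hadamard (hN : Feasible μ ν N) (hu : ∀ t i, 0 < u t i)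
    (hv : ∀ t j, 0 < v t j) (hscal : ∀ t, N t = (∑ s, N s) ⊙ vecMulVec (u t) (v t)) :
    J N = dualValue μ ν u v := by
  rw [J_eq_dualValue_add hN hu hv, sum_eq_zero fun t _ => by rw [← hscal t, klMat_self],
    add_zero]

lemma sum_eq_sum_of_eq_hadamard {M : Fin T → Matrix (Fin n) (Fin n) ℝ}
    (hN : Feasible μ ν N) (hM : Feasible μ ν M) (hu : ∀ t i, 0 < u t i) (hv : ∀ t j, 0 < v t j)
    (hNs : ∀ t, N t = (∑ s, N s) ⊙ vecMulVec (u t) (v t))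
    (hMs : ∀ t, M t = (∑ s, M s) ⊙ vecMulVec (u t) (v t))
    (hspan : Submodule.span ℝ (Set.range u) = ⊤ ∨ Submodule.span ℝ (Set.range v) = ⊤) :
    ∑ s, N s = ∑ s, M s := by
  rcases hspan with hu_span | hv_span
  · refine Matrix.transpose_injective <| Matrix.eq_of_mulVec_eq_of_span_eq_top hu_span
      fun t => funext fun j => mul_left_cancel₀ (hv t j).ne' ?_
    rw [← Matrix.col_sum_hadamard_vecMulVec, ← Matrix.col_sum_hadamard_vecMulVec, ← hNs, ← hMs,
      hN.2.2, hM.2.2]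
  · refine Matrix.eq_of_mulVec_eq_of_span_eq_top hv_span
      fun t => funext fun i => mul_left_cancel₀ (hu t i).ne' ?_
    rw [← Matrix.row_sum_hadamard_vecMulVec, ← Matrix.row_sum_hadamard_vecMulVec, ← hNs, ← hMs,
      hN.2.1, hM.2.1]

end Tuples

theorem stmt17_general (n T : ℕ)
    (μ ν : Fin T → Fin n → ℝ)
    (Mstar : Fin T → Matrix (Fin n) (Fin n) ℝ) (hfeas : Feasible μ ν Mstar)
    (u v : Fin T → Fin n → ℝ) (hu : ∀ t i, 0 < u t i) (hv : ∀ t j, 0 < v t j)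
    (hscal : ∀ t i j, Mstar t i j = (∑ s, Mstar s) i j * (u t i * v t j))
    (hdual : ∀ i j : Fin n, ∑ t, u t i * v t j ≤ 1)
    (hspan : Submodule.span ℝ (Set.range u) = ⊤ ∨ Submodule.span ℝ (Set.range v) = ⊤) :
    (∀ N, Feasible μ ν N → J Mstar ≤ J N) ∧
    (∀ N, Feasible μ ν N → J N = J Mstar → N = Mstar) := by
  have hMs : ∀ t, Mstar t = (∑ s, Mstar s) ⊙ vecMulVec (u t) (v t) :=
    fun t => Matrix.ext (hscal t)
  have hJM : J Mstar = dualValue μ ν u v := J_eq_dualValue_of_eq_hadamard hfeas hu hv hMs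
  refine ⟨fun N hN => hJM ▸ dualValue_le_J hN hu hv hdual, fun N hN hJ => ?_⟩
  have hNs := eq_hadamard_of_J_eq_dualValue hN hu hv hdual (hJ.trans hJM)
  have hsum := sum_eq_sum_of_eq_hadamard hN hfeas hu hv hNs hMs hspan
  funext t
  rw [hNs t, hMs t, hsum]

/-- uniqueness under a span condition on the dual scalings: if in
addition to the optimality certificate the `u_t` or the `v_t` span `ℝⁿ`, then the
feasible tuple is the unique global minimizer of `J`. -/
theorem stmt17 (n T : ℕ) (hn : 0 < n) (hT : 0 < T)
    (μ ν : Fin T → Fin n → ℝ)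
    (hμ : ∀ t i, 0 ≤ μ t i) (hν : ∀ t j, 0 ≤ ν t j)
    (hmass : ∀ t, ∑ i, μ t i = ∑ j, ν t j)
    (Mstar : Fin T → Matrix (Fin n) (Fin n) ℝ) (hfeas : Feasible μ ν Mstar)
    (u v : Fin T → Fin n → ℝ) (hu : ∀ t i, 0 < u t i) (hv : ∀ t j, 0 < v t j)
    (hscal : ∀ t i j, Mstar t i j = (∑ s, Mstar s) i j * (u t i * v t j))
    (hdual : ∀ i j : Fin n, ∑ t, u t i * v t j ≤ 1)
    (hspan : Submodule.span ℝ (Set.range u) = ⊤ ∨ Submodule.span ℝ (Set.range v) = ⊤) :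
    (∀ N, Feasible μ ν N → J Mstar ≤ J N) ∧
    (∀ N, Feasible μ ν N → J N = J Mstar → N = Mstar) :=
  stmt17_general n T μ ν Mstar hfeas u v hu hv hscal hdual hspan
end
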